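/- Fix n ≥ 1. Let λ, μ : (ZMod n)² → ℝ be probability vectors and let J_λ = Σ_{a,b} λ_{ab} |Φ_ab⟩⟨Φ_ab| and J_μ = Σ_{a,b} μ_{ab} |Φ_ab⟩⟨Φ_ab| be the corresponding Bell-diagonal n²×n² Choi matrices (Choi states of Weyl-covariant channels). Then the following are equivalent: (1) J_μ lies in the convex hull of { (W_ab ⊗ W_cd) J_λ (W_ab ⊗ W_cd)† : a,b,c,d ∈ ZMod n } (the Choi-state form of an allowed operation built from pre- and post-processing Weyl-covariant channels with shared randomness); (2) there exists a probability vector (p_{αβ})_{α,β ∈ ZMod n} such that μ = Σ_{α,β} p_{αβ} (X_n^α ⊗ X_n^β) λ, i.e. μ is a convex combination of local cyclic permutations of λ. -/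

import Mathlib

/-!
Conjugation by `W_ab ⊗ W_cd` maps each Bell vector to another Bell vector times a phase of modulus
one, so it permutes the Bell projectors and acts on `J_λ` as the local cyclic shift of `λ` by
`(a - c, -(b + d))`; every shift arises this way. The Bell vectors are orthonormal, so `λ ↦ J_λ` is
an injective linear map, and it carries the convex hull of the shifts of `λ` onto the convex hull of
the conjugates of `J_λ`.
-/

open Matrix Kronecker

noncomputable section

/-- A probability vector: nonnegative entries summing to 1. -/
def IsProbVec {ι : Type*} [Fintype ι] (p : ι → ℝ) : Prop :=
  (∀ i, 0 ≤ p i) ∧ ∑ i, p i = 1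

/-- The discrete Weyl operators on `ℂⁿ`: `W_ab = Σ_c ω^{bc} |a+c⟩⟨c|`, `ω = e^{2πi/n}`. -/
def Wd (n : ℕ) [NeZero n] (a b : ZMod n) : Matrix (ZMod n) (ZMod n) ℂ :=
  Matrix.of fun r c =>
    if r = a + c then Complex.exp (2 * Real.pi * Complex.I / n) ^ (b.val * c.val) else 0

/-- The generalized Bell basis vector `|Φ_ab⟩ = (I ⊗ W_ab)|Φ_00⟩`,
`|Φ_00⟩ = (1/√n) Σ_i |ii⟩`; explicitly `Φ_ab (i,j) = (1/√n) (W_ab) j i`. -/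
def belld (n : ℕ) [NeZero n] (a b : ZMod n) : ZMod n × ZMod n → ℂ :=
  fun p => ((Real.sqrt n : ℝ) : ℂ)⁻¹ * Wd n a b p.2 p.1

/-- The generalized Bell projector `|Φ_ab⟩⟨Φ_ab|`. -/
def bellProjd (n : ℕ) [NeZero n] (a b : ZMod n) :
    Matrix (ZMod n × ZMod n) (ZMod n × ZMod n) ℂ :=
  Matrix.of fun p q => belld n a b p * (starRingEnd ℂ) (belld n a b q)

/-- The Bell-diagonal Choi matrix `J_λ = Σ_{a,b} λ_{ab} |Φ_ab⟩⟨Φ_ab|`. -/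
def choid (n : ℕ) [NeZero n] (lam : ZMod n × ZMod n → ℝ) :
    Matrix (ZMod n × ZMod n) (ZMod n × ZMod n) ℂ :=
  ∑ ab : ZMod n × ZMod n, lam ab • bellProjd n ab.1 ab.2

lemma mem_convexHull_range_iff_exists_isProbVec {ι E : Type*} [Fintype ι] [AddCommGroup E]
    [Module ℝ E] (v : ι → E) (x : E) :
    x ∈ convexHull ℝ (Set.range v) ↔ ∃ w : ι → ℝ, IsProbVec w ∧ x = ∑ i, w i • v i := by
  classical
  constructor
  · rw [convexHull_range_eq_exists_affineCombination]
    rintro ⟨s, w, hw₀, hw₁, rfl⟩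
    have hW₁ : ∑ i, Set.indicator (↑s) w i = 1 := by
      rw [← hw₁, Finset.sum_indicator_subset w s.subset_univ]
    refine ⟨Set.indicator (↑s) w, ⟨Set.indicator_nonneg hw₀, hW₁⟩, ?_⟩
    rw [s.affineCombination_indicator_subset w v s.subset_univ,
      Finset.affineCombination_eq_linear_combination _ _ _ hW₁]
  · rintro ⟨w, ⟨hw₀, hw₁⟩, rfl⟩
    exact mem_convexHull_of_exists_fintype w v hw₀ hw₁ Set.mem_range_self rfl

lemma mul_vecMulVec_star_mul_conjTranspose {α l m : Type*} [Semiring α] [StarRing α] [Fintype m]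
    (M : Matrix l m α) (v : m → α) :
    M * vecMulVec v (star v) * Mᴴ = vecMulVec (M *ᵥ v) (star (M *ᵥ v)) := by
  rw [mul_vecMulVec, vecMulVec_mul, star_mulVec]

lemma vecMulVec_smul_star_smul {m : Type*} {z : ℂ} (hz : ‖z‖ = 1) (v : m → ℂ) :
    vecMulVec (z • v) (star (z • v)) = vecMulVec v (star v) := by
  rw [star_smul, vecMulVec_smul, ← smul_vecMulVec, smul_smul, Complex.star_def, mul_comm,
    Complex.mul_conj', hz]
  simp

open ZMod

variable {n : ℕ} [NeZero n]

lemma Wd_apply (a b r c : ZMod n) :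
    Wd n a b r c = if r = a + c then stdAddChar (b * c) else 0 := by
  have hψ : stdAddChar (b * c) = Complex.exp (2 * Real.pi * Complex.I / n) ^ (b.val * c.val) := by
    rw [← natCast_zmod_val b, ← natCast_zmod_val c, ← Nat.cast_mul, stdAddChar_apply,
      toCircle_natCast, ← Complex.exp_nat_mul, natCast_zmod_val, natCast_zmod_val]
    ring_nf
  rw [hψ]; rfl

lemma Wd_mul_Wd (a b c d : ZMod n) :
    Wd n a b * Wd n c d = stdAddChar (b * c) • Wd n (a + c) (b + d) := by
  ext r s
  simp only [mul_apply, Matrix.smul_apply, Wd_apply, ite_mul, mul_ite, zero_mul, mul_zero,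
    smul_eq_mul, Finset.sum_ite_eq', Finset.mem_univ, if_true, add_assoc,
    ← AddChar.map_add_eq_mul]
  congr 2
  ring

lemma transpose_Wd (a b : ZMod n) :
    (Wd n a b)ᵀ = stdAddChar (-(a * b)) • Wd n (-a) b := by
  ext r c
  simp only [transpose_apply, Matrix.smul_apply, Wd_apply, smul_eq_mul, mul_ite, mul_zero,
    ← AddChar.map_add_eq_mul]
  have : c = a + r ↔ r = -a + c := by grind
  simp only [this]
  split_ifs with h
  · rw [h]; ring_nf
  · rfl

lemma conjTranspose_Wd (a b : ZMod n) :
    (Wd n a b)ᴴ = stdAddChar (a * b) • Wd n (-a) (-b) := by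
  ext r c
  simp only [conjTranspose_apply, Matrix.smul_apply, Wd_apply, smul_eq_mul, mul_ite, mul_zero]
  have : c = a + r ↔ r = -a + c := by grind
  simp only [this]
  split_ifs with h
  · rw [RCLike.star_def, ← AddChar.map_neg_eq_conj, ← AddChar.map_add_eq_mul, h]; ring_nf
  · exact star_zero _

lemma trace_Wd (a b : ZMod n) : (Wd n a b).trace = if a = 0 ∧ b = 0 then (n : ℂ) else 0 := by
  simp only [trace, diag, Wd_apply, right_eq_add]
  by_cases ha : a = 0
  · simp_rw [ha, true_and, if_true, mul_comm b]
    rw [AddChar.sum_mulShift b (isPrimitive_stdAddChar n), ZMod.card, Nat.cast_ite, Nat.cast_zero]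
  · simp [ha]

lemma belld_eq_smul_vec (a b : ZMod n) :
    belld n a b = ((Real.sqrt n : ℝ) : ℂ)⁻¹ • vec (Wd n a b) := rfl

lemma bellProjd_eq_vecMulVec (a b : ZMod n) :
    bellProjd n a b = vecMulVec (belld n a b) (star (belld n a b)) := rfl

lemma star_belld_dotProduct_belld (a b e f : ZMod n) :
    star (belld n a b) ⬝ᵥ belld n e f = if (a, b) = (e, f) then 1 else 0 := by
  have hn : (((Real.sqrt n : ℝ) : ℂ)⁻¹) * ((Real.sqrt n : ℝ) : ℂ)⁻¹ = (n : ℂ)⁻¹ := by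
    rw [← mul_inv, ← Complex.ofReal_mul, Real.mul_self_sqrt n.cast_nonneg, Complex.ofReal_natCast]
  rw [belld_eq_smul_vec, belld_eq_smul_vec, star_smul, smul_dotProduct, dotProduct_smul,
    star_vec_dotProduct_vec, conjTranspose_Wd, Matrix.smul_mul, Wd_mul_Wd, trace_smul, trace_smul,
    trace_Wd]
  simp only [neg_add_eq_zero, Prod.mk.injEq]
  split_ifs with h
  · obtain ⟨rfl, rfl⟩ := h
    have hψ : stdAddChar (a * b) * stdAddChar (-b * a) = 1 := by
      rw [← AddChar.map_add_eq_mul, neg_mul, mul_comm b, add_neg_cancel, AddChar.map_zero_eq_one]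
    rw [star_inv₀, Complex.star_def, Complex.conj_ofReal]
    simp only [smul_eq_mul, ← mul_assoc, hn]
    linear_combination (n : ℂ)⁻¹ * n * hψ + inv_mul_cancel₀ (NeZero.ne (n : ℂ))
  · simp only [smul_zero]

-- `(A ⊗ B) *ᵥ vec X = vec (B * X * Aᵀ)` reduces this to the Weyl relations.
lemma Wd_kronecker_Wd_mulVec_belld (a b c d e f : ZMod n) :
    (Wd n a b ⊗ₖ Wd n c d) *ᵥ belld n e f =
      stdAddChar (d * e - a * (d + f + b)) • belld n (c + e - a) (d + f + b) := by
  have hψ : stdAddChar (d * e - a * (d + f + b)) =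
      stdAddChar (d * e) * stdAddChar (-(a * b)) * stdAddChar ((d + f) * -a) := by
    rw [← AddChar.map_add_eq_mul, ← AddChar.map_add_eq_mul]; ring_nf
  rw [belld_eq_smul_vec, belld_eq_smul_vec, mulVec_smul, kronecker_mulVec_vec, transpose_Wd,
    Matrix.mul_smul, Wd_mul_Wd, Matrix.smul_mul, Wd_mul_Wd, hψ, ← sub_eq_add_neg]
  simp only [vec_smul, smul_smul]
  ring_nf

lemma kronecker_conj_bellProjd (a b c d e f : ZMod n) :
    (Wd n a b ⊗ₖ Wd n c d) * bellProjd n e f * (Wd n a b ⊗ₖ Wd n c d)ᴴ =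
      bellProjd n (c + e - a) (d + f + b) := by
  rw [bellProjd_eq_vecMulVec, mul_vecMulVec_star_mul_conjTranspose, Wd_kronecker_Wd_mulVec_belld,
    vecMulVec_smul_star_smul (AddChar.norm_apply _ _), bellProjd_eq_vecMulVec]

lemma kronecker_conj_choid (ν : ZMod n × ZMod n → ℝ) (a b c d : ZMod n) :
    (Wd n a b ⊗ₖ Wd n c d) * choid n ν * (Wd n a b ⊗ₖ Wd n c d)ᴴ =
      choid n (fun x => ν (x + (a - c, -(b + d)))) := by
  simp only [choid, Matrix.mul_sum, Matrix.sum_mul, Matrix.mul_smul, Matrix.smul_mul,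
    kronecker_conj_bellProjd]
  refine Fintype.sum_equiv (Equiv.addRight (c - a, d + b)) _ _ fun x => ?_
  have hx : x + (c - a, d + b) + (a - c, -(b + d)) = x := by ext <;> simp <;> ring
  simp only [Equiv.coe_addRight, hx, Prod.fst_add, Prod.snd_add]
  congr 2 <;> ring

lemma choid_mulVec_belld (ν : ZMod n × ZMod n → ℝ) (a b : ZMod n) :
    choid n ν *ᵥ belld n a b = ν (a, b) • belld n a b := by
  simp only [choid, sum_mulVec, smul_mulVec, bellProjd_eq_vecMulVec, vecMulVec_mulVec,
    op_smul_eq_smul, star_belld_dotProduct_belld, ite_smul, one_smul, zero_smul, smul_ite,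
    smul_zero, Prod.mk.eta, Finset.sum_ite_eq', Finset.mem_univ, if_true]

lemma choid_injective : Function.Injective (choid n) := by
  intro ν ν' h
  funext x
  have hx := congrArg (fun J => star (belld n x.1 x.2) ⬝ᵥ J *ᵥ belld n x.1 x.2) h
  simpa [choid_mulVec_belld, star_belld_dotProduct_belld] using hx

variable (n) in
def choidLinearMap : (ZMod n × ZMod n → ℝ) →ₗ[ℝ] Matrix (ZMod n × ZMod n) (ZMod n × ZMod n) ℂ where
  toFun := choid n
  map_add' ν ν' := by simp only [choid, Pi.add_apply, add_smul, Finset.sum_add_distrib]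
  map_smul' r ν := by simp only [choid, Pi.smul_apply, smul_eq_mul, mul_smul, Finset.smul_sum,
    RingHom.id_apply]

lemma coe_choidLinearMap : ⇑(choidLinearMap n) = choid n := rfl

lemma setOf_kronecker_conj_choid (ν : ZMod n × ZMod n → ℝ) :
    { K : Matrix (ZMod n × ZMod n) (ZMod n × ZMod n) ℂ |
        ∃ a b c d : ZMod n, K = (Wd n a b ⊗ₖ Wd n c d) * choid n ν * (Wd n a b ⊗ₖ Wd n c d)ᴴ } =
      choid n '' Set.range (fun σ x => ν (x + σ)) := by
  ext K
  constructor
  · rintro ⟨a, b, c, d, rfl⟩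
    exact ⟨_, ⟨_, rfl⟩, (kronecker_conj_choid ν a b c d).symm⟩
  · rintro ⟨_, ⟨σ, rfl⟩, rfl⟩
    refine ⟨σ.1, -σ.2, 0, 0, ?_⟩
    rw [kronecker_conj_choid, sub_zero, add_zero, neg_neg]

theorem result3 (n : ℕ) [NeZero n] (lam mu : ZMod n × ZMod n → ℝ) :
    choid n mu ∈ convexHull ℝ
        { K : Matrix (ZMod n × ZMod n) (ZMod n × ZMod n) ℂ |
          ∃ a b c d : ZMod n,
            K = (Wd n a b ⊗ₖ Wd n c d) * choid n lam * (Wd n a b ⊗ₖ Wd n c d)ᴴ } ↔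
      ∃ p : ZMod n × ZMod n → ℝ, IsProbVec p ∧
        ∀ ab : ZMod n × ZMod n,
          mu ab = ∑ αβ : ZMod n × ZMod n, p αβ * lam (ab.1 + αβ.1, ab.2 + αβ.2) := by
  rw [setOf_kronecker_conj_choid, ← coe_choidLinearMap, ← LinearMap.image_convexHull,
    coe_choidLinearMap, choid_injective.mem_set_image, mem_convexHull_range_iff_exists_isProbVec]
  simp only [funext_iff, Finset.sum_apply, Pi.smul_apply, smul_eq_mul]
  rfl

end
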